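/- Let L be a Hermitian lattice of signature (1,n) over O_F, ℓ ∈ L a primitive vector with ⟨ℓ,ℓ⟩ < 0, K_ℓ = ℓ^⊥ ∩ L, Div(ℓ) the ideal generated by {⟨v,ℓ⟩ : v ∈ L}, and I_ℓ = ⟨ℓ,ℓ⟩·Div(ℓ)^{-1} ⊆ O_F. Then there is an isomorphism of O_F-modules L / (ℓO_F ⊕ K_ℓ) ≅ O_F / I_ℓ. -/

import Mathlib

open NumberField

/-- A Hermitian form on a module `M` over a ring `R` with respect to a ring
endomorphism `σ` of `R` (the conjugation). -/
def IsHermitianForm (R : Type*) [CommRing R] (σ : R →+* R)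
    {M : Type*} [AddCommGroup M] [Module R M] (h : M → M → R) : Prop :=
  (∀ x y z : M, h (x + y) z = h x z + h y z) ∧
  (∀ (r : R) (x y : M), h (r • x) y = r * h x y) ∧
  (∀ x y : M, h y x = σ (h x y))

/-- The orthogonal complement `ℓ^⊥ ∩ L = {w ∈ L ∣ ⟨w,ℓ⟩ = 0}` of a vector `ℓ`. -/
def orthComplement {R : Type*} [CommRing R] {σ : R →+* R}
    {M : Type*} [AddCommGroup M] [Module R M] {h : M → M → R}
    (hherm : IsHermitianForm R σ h) (ℓ : M) : Submodule R M where
  carrier := {w | h w ℓ = 0}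
  add_mem' := by
    intro a b ha hb
    show h (a + b) ℓ = 0
    rw [hherm.1, ha, hb, add_zero]
  zero_mem' := by
    have h0 := hherm.1 0 0 ℓ
    simp only [add_zero] at h0
    show h 0 ℓ = 0
    linear_combination -h0
  smul_mem' := by
    intro r a ha
    show h (r • a) ℓ = 0
    rw [hherm.2.1, ha, mul_zero]

/-- The ideal `Div(ℓ)` generated by `{⟨v,ℓ⟩ : v ∈ L}`. -/
def divIdeal {R : Type*} [CommRing R]
    {M : Type*} [AddCommGroup M] [Module R M] (h : M → M → R) (ℓ : M) : Ideal R :=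
  Ideal.span {r : R | ∃ v : M, h v ℓ = r}

/-! The form `⟨·, ℓ⟩` maps `L` onto `Div(ℓ)` with kernel `K_ℓ` and maps `ℓ 𝓞_F` onto
`(⟨ℓ, ℓ⟩) = I_ℓ Div(ℓ)`, so the quotient is `Div(ℓ) ⧸ I_ℓ Div(ℓ)`. In a Dedekind domain
`D ⧸ I D ≅ R ⧸ I` for nonzero `I`, `D`: pick `x` with `D = I D + (x)`; then `r ↦ r x` is onto
`D ⧸ I D`, and its kernel is `I` because the ideal `D` can be cancelled. -/

open Submodule

noncomputable def LinearMap.quotSupKerEquivOfSurjective {R M N : Type*} [Ring R]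
    [AddCommGroup M] [Module R M] [AddCommGroup N] [Module R N]
    (f : M →ₗ[R] N) (hf : Function.Surjective f) (P : Submodule R M) :
    (M ⧸ (P ⊔ LinearMap.ker f)) ≃ₗ[R] N ⧸ P.map f :=
  (Submodule.quotEquivOfEq _ _ (by rw [LinearMap.ker_comp, ker_mkQ, comap_map_eq])).trans
    (((P.map f).mkQ ∘ₗ f).quotKerEquivOfSurjective ((P.map f).mkQ_surjective.comp hf))

section Dedekind

variable {R : Type*} [CommRing R] [IsDedekindDomain R]

theorem Ideal.mem_of_mul_mem_mul_of_sup_span_eq {I D : Ideal R} (hD : D ≠ ⊥) {x r : R}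
    (hx : D * I ⊔ Ideal.span {x} = D) (hr : r * x ∈ I * D) : r ∈ I := by
  have hle : Ideal.span {r} * D ≤ I * D :=
    calc Ideal.span {r} * D = Ideal.span {r} * (D * I) ⊔ Ideal.span {r * x} := by
          rw [← Ideal.span_singleton_mul_span_singleton, ← Ideal.mul_sup, hx]
      _ ≤ I * D := sup_le (Ideal.mul_le_right.trans (mul_comm D I).le)
          ((Ideal.span_singleton_le_iff_mem _).mpr hr)
  rwa [← Ideal.dvd_iff_le, mul_dvd_mul_iff_right hD, Ideal.dvd_iff_le,
    Ideal.span_singleton_le_iff_mem] at hle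

theorem Ideal.nonempty_quotient_comap_mul_linearEquiv {I D : Ideal R} (hI : I ≠ ⊥) (hD : D ≠ ⊥) :
    Nonempty ((D ⧸ Submodule.comap D.subtype (I * D)) ≃ₗ[R] R ⧸ I) := by
  obtain ⟨x, hx⟩ := IsDedekindDomain.exists_sup_span_eq (Ideal.mul_le_left : D * I ≤ D)
    (mul_ne_zero hD hI)
  have hxD : x ∈ D := hx ▸ Ideal.mem_sup_right (Ideal.mem_span_singleton_self x)
  let φ : R →ₗ[R] D ⧸ Submodule.comap D.subtype (I * D) :=
    (Submodule.comap D.subtype (I * D)).mkQ ∘ₗ LinearMap.toSpanSingleton R D ⟨x, hxD⟩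
  have hsurj : Function.Surjective φ := by
    rintro ⟨⟨d, hd⟩⟩
    rw [← hx, sup_comm, Ideal.mem_span_singleton_sup] at hd
    obtain ⟨a, b, hb, rfl⟩ := hd
    refine ⟨a, (Submodule.Quotient.eq _).mpr ?_⟩
    simpa [mul_comm I D] using neg_mem hb
  have hker : LinearMap.ker φ = I := by
    ext r
    simp only [φ, LinearMap.mem_ker, LinearMap.comp_apply, mkQ_apply,
      Submodule.Quotient.mk_eq_zero, LinearMap.toSpanSingleton_apply]
    exact ⟨Ideal.mem_of_mul_mem_mul_of_sup_span_eq hD hx, (Ideal.mul_mem_mul · hxD)⟩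
  exact ⟨((Submodule.quotEquivOfEq _ _ hker.symm).trans
    (φ.quotKerEquivOfSurjective hsurj)).symm⟩

theorem LinearMap.nonempty_quotient_span_singleton_sup_ker_linearEquiv {M : Type*}
    [AddCommGroup M] [Module R M] (f : M →ₗ[R] R) {ℓ : M} (hℓ : f ℓ ≠ 0) {I : Ideal R}
    (hI : I * LinearMap.range f = Ideal.span {f ℓ}) :
    Nonempty ((M ⧸ (R ∙ ℓ ⊔ LinearMap.ker f)) ≃ₗ[R] R ⧸ I) := by
  have hD : LinearMap.range f ≠ ⊥ := fun h0 =>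
    hℓ (by simpa [h0] using LinearMap.mem_range_self f ℓ)
  have hI0 : I ≠ ⊥ := by
    rintro rfl
    rw [Ideal.bot_mul, eq_comm, Ideal.span_singleton_eq_bot] at hI
    exact hℓ hI
  obtain ⟨e⟩ := Ideal.nonempty_quotient_comap_mul_linearEquiv hI0 hD
  have hmap : (R ∙ ℓ).map f.rangeRestrict =
      Submodule.comap (LinearMap.range f).subtype (I * LinearMap.range f) := by
    rw [LinearMap.rangeRestrict, LinearMap.map_codRestrict, map_span, Set.image_singleton, hI]
  rw [← LinearMap.ker_rangeRestrict]
  exact ⟨(f.rangeRestrict.quotSupKerEquivOfSurjective f.surjective_rangeRestrict _).trans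
    ((Submodule.quotEquivOfEq _ _ hmap).trans e)⟩

end Dedekind

namespace IsHermitianForm

variable {R : Type*} [CommRing R] {σ : R →+* R} {M : Type*} [AddCommGroup M] [Module R M]
  {h : M → M → R}

def toLinearMap (hherm : IsHermitianForm R σ h) (ℓ : M) : M →ₗ[R] R where
  toFun v := h v ℓ
  map_add' v w := hherm.1 v w ℓ
  map_smul' r v := hherm.2.1 r v ℓ

theorem ker_toLinearMap (hherm : IsHermitianForm R σ h) (ℓ : M) :
    LinearMap.ker (hherm.toLinearMap ℓ) = orthComplement hherm ℓ :=
  rfl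

theorem range_toLinearMap (hherm : IsHermitianForm R σ h) (ℓ : M) :
    LinearMap.range (hherm.toLinearMap ℓ) = divIdeal h ℓ := by
  rw [divIdeal, ← span_eq (LinearMap.range (hherm.toLinearMap ℓ)), LinearMap.coe_range]
  rfl

end IsHermitianForm

theorem quotient_by_split_sublattice_iso_general
    (F : Type) [Field F] [NumberField F]
    (σ : 𝓞 F →+* 𝓞 F) (ι : F →+* ℂ)
    (M : Type) [AddCommGroup M] [Module (𝓞 F) M]
    (h : M → M → 𝓞 F) (hherm : IsHermitianForm (𝓞 F) σ h)
    (ℓ : M)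
    (hneg : (ι (algebraMap (𝓞 F) F (h ℓ ℓ))).re < 0)
    (I : Ideal (𝓞 F))
    (hI : I * divIdeal h ℓ = Ideal.span {h ℓ ℓ}) :
    Nonempty ((M ⧸ (Submodule.span (𝓞 F) {ℓ} ⊔ orthComplement hherm ℓ))
      ≃ₗ[𝓞 F] ((𝓞 F) ⧸ I)) := by
  have hℓ : h ℓ ℓ ≠ 0 := by
    intro h0
    simp [h0] at hneg
  rw [← hherm.range_toLinearMap] at hI
  rw [← hherm.ker_toLinearMap]
  exact (hherm.toLinearMap ℓ).nonempty_quotient_span_singleton_sup_ker_linearEquiv hℓ hI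

set_option synthInstance.maxHeartbeats 1000000 in
set_option maxHeartbeats 1000000 in
/-- Let `L` be a Hermitian lattice of signature `(1,n)` over the ring of
integers `𝓞 F` of an imaginary quadratic field `F`, `ℓ ∈ L` a primitive vector
with `⟨ℓ,ℓ⟩ < 0`, `K_ℓ = ℓ^⊥ ∩ L`, `Div(ℓ)` the ideal generated by
`{⟨v,ℓ⟩ : v ∈ L}`, and `I_ℓ = ⟨ℓ,ℓ⟩·Div(ℓ)^{-1}` (the integral ideal with
`I_ℓ · Div(ℓ) = (⟨ℓ,ℓ⟩)`).  Then `L/(ℓ𝓞 F ⊕ K_ℓ) ≅ 𝓞 F / I_ℓ` as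
`𝓞 F`-modules. -/
theorem quotient_by_split_sublattice_iso
    (F : Type) [Field F] [NumberField F]
    (hdeg : Module.finrank ℚ F = 2)
    (himag : ∀ v : InfinitePlace F, v.IsComplex)
    (σ : 𝓞 F →+* 𝓞 F) (ι : F →+* ℂ)
    (hσ : ∀ x : 𝓞 F, ι (algebraMap (𝓞 F) F (σ x)) = starRingEnd ℂ (ι (algebraMap (𝓞 F) F x)))
    (M : Type) [AddCommGroup M] [Module (𝓞 F) M]
    [Module.Free (𝓞 F) M] [Module.Finite (𝓞 F) M]
    (h : M → M → 𝓞 F) (hherm : IsHermitianForm (𝓞 F) σ h)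
    (n : ℕ)
    -- signature `(1,n)`: rank `n+1`, and there is a positive vector whose
    -- orthogonal complement is negative definite
    (hrank : Module.finrank (𝓞 F) M = n + 1)
    (hsig : ∃ v : M, 0 < (ι (algebraMap (𝓞 F) F (h v v))).re ∧
      ∀ w : M, h w v = 0 → w ≠ 0 → (ι (algebraMap (𝓞 F) F (h w w))).re < 0)
    (ℓ : M)
    (hprim : ∀ (r : 𝓞 F) (x : M), ℓ = r • x → IsUnit r)
    (hneg : (ι (algebraMap (𝓞 F) F (h ℓ ℓ))).re < 0)
    (I : Ideal (𝓞 F))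
    (hI : I * divIdeal h ℓ = Ideal.span {h ℓ ℓ}) :
    Nonempty ((M ⧸ (Submodule.span (𝓞 F) {ℓ} ⊔ orthComplement hherm ℓ))
      ≃ₗ[𝓞 F] ((𝓞 F) ⧸ I)) :=
  quotient_by_split_sublattice_iso_general F σ ι M h hherm ℓ hneg I hI
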